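/- Let k ∈ ℂ with k ∉ {−2, −3} and set τ = 2/(k+3). Let V carry a smooth sl₂-current representation of level k+1 with Sugawara operators L^S_n, together with a family of operators L^V_n (n ∈ ℤ) satisfying the Virasoro relations [L^V_m, L^V_n] = (m − n) L^V_{m+n} + ((m³−m)/12) δ_{m+n,0} c · Id for some c ∈ ℂ and commuting with all currents: [L^V_m, X(n)] = 0 for all X ∈ sl₂(ℂ) and m, n ∈ ℤ. Set L_n = L^V_n + L^S_n. Suppose v ∈ V satisfies X(n)v = 0 for all n ≥ 0 and all X ∈ sl₂(ℂ). Then for every κ ∈ ℂ, (−2 L_{−2} + (κ/2) L_{−1}² + (τ/2) Σ_{a=1}^{3} X_a(−1)²) v = (−2 L^V_{−2} + (κ/2) (L^V_{−1})²) v; in particular, if additionally (−2 L^V_{−2} + (κ/2)(L^V_{−1})²) v = 0, then the total drift operator −2 L_{−2} + (κ/2) L_{−1}² + (τ/2) Σ_{a=1}^{3} X_a(−1)² annihilates v. -/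

import Mathlib

open LieAlgebra.SpecialLinear

noncomputable section

/-- The standard basis element `E` of sl₂(ℂ). -/
def matE : ↥(sl (Fin 2) ℂ) :=
  ⟨!![0, 1; 0, 0], by show _ ∈ LinearMap.ker (Matrix.traceLinearMap (Fin 2) ℂ ℂ); simp [Matrix.trace_fin_two]⟩

/-- The standard basis element `H` of sl₂(ℂ). -/
def matH : ↥(sl (Fin 2) ℂ) :=
  ⟨!![1, 0; 0, -1], by show _ ∈ LinearMap.ker (Matrix.traceLinearMap (Fin 2) ℂ ℂ); simp [Matrix.trace_fin_two]⟩

/-- The standard basis element `F` of sl₂(ℂ). -/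
def matF : ↥(sl (Fin 2) ℂ) :=
  ⟨!![0, 0; 1, 0], by show _ ∈ LinearMap.ker (Matrix.traceLinearMap (Fin 2) ℂ ℂ); simp [Matrix.trace_fin_two]⟩

/-- The invariant bilinear form `(X|Y) = Tr(XY)` on sl₂(ℂ). -/
def trForm (A B : ↥(sl (Fin 2) ℂ)) : ℂ :=
  Matrix.trace ((A : Matrix (Fin 2) (Fin 2) ℂ) * (B : Matrix (Fin 2) (Fin 2) ℂ))

/-- A smooth sl₂-current representation of level `k` on a complex vector space `V`:
operators `cur X n` for `X ∈ sl₂(ℂ)`, `n ∈ ℤ`, linear in `X`, satisfying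
`[X(m), Y(n)] = [X,Y](m+n) + m (X|Y) δ_{m+n,0} k·Id`, and smooth (every vector is
annihilated by all currents of sufficiently large mode). -/
structure SmoothCurrentRep (k : ℂ) (V : Type*) [AddCommGroup V] [Module ℂ V] where
  cur : ↥(sl (Fin 2) ℂ) → ℤ → Module.End ℂ V
  cur_add : ∀ (A B : ↥(sl (Fin 2) ℂ)) (n : ℤ), cur (A + B) n = cur A n + cur B n
  cur_smul : ∀ (c : ℂ) (A : ↥(sl (Fin 2) ℂ)) (n : ℤ), cur (c • A) n = c • cur A n
  commutator : ∀ (A B : ↥(sl (Fin 2) ℂ)) (m n : ℤ),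
    ⁅cur A m, cur B n⁆ = cur ⁅A, B⁆ (m + n)
      + (if m + n = 0 then (m : ℂ) * trForm A B * k else 0) • (1 : Module.End ℂ V)
  smooth : ∀ v : V, ∃ N : ℤ, ∀ (A : ↥(sl (Fin 2) ℂ)) (n : ℤ), N ≤ n → cur A n v = 0

/-- The orthonormal basis `X₁ = H/√2`, `X₂ = (E+F)/√2`, `X₃ = i(E−F)/√2`
of sl₂(ℂ) with respect to the trace form. -/
def onb : Fin 3 → ↥(sl (Fin 2) ℂ) :=
  ![((Real.sqrt 2 : ℂ))⁻¹ • matH,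
    ((Real.sqrt 2 : ℂ))⁻¹ • (matE + matF),
    (Complex.I * ((Real.sqrt 2 : ℂ))⁻¹) • (matE - matF)]

/-- The normal-ordered product `:X(m) X(l):` of two current operators. -/
def nOrd {V : Type*} [AddCommGroup V] [Module ℂ V]
    (cur : ↥(sl (Fin 2) ℂ) → ℤ → Module.End ℂ V)
    (A : ↥(sl (Fin 2) ℂ)) (m l : ℤ) : Module.End ℂ V :=
  if m < 0 then cur A m * cur A l else cur A l * cur A m

/-- `L` is the family of Sugawara operators of a level-`k` current family `cur`:
`L n = (1/(2(k+2))) Σ_{a=1}^{3} Σ_{m∈ℤ} :X_a(m) X_a(n−m):`, where for each vector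
the (finitely supported) sum over `m ∈ ℤ` is taken as a `finsum`. -/
def IsSugawara {V : Type*} [AddCommGroup V] [Module ℂ V] (k : ℂ)
    (cur : ↥(sl (Fin 2) ℂ) → ℤ → Module.End ℂ V) (L : ℤ → Module.End ℂ V) : Prop :=
  ∀ (n : ℤ) (v : V),
    L n v = (2 * (k + 2))⁻¹ • ∑ᶠ m : ℤ, (∑ a : Fin 3, nOrd cur (onb a) m (n - m)) v

/-!
STATEMENT 10: Let `k ∉ {−2, −3}`, `τ = 2/(k+3)`.  Let `V` carry a smooth
sl₂-current representation of level `k+1` with Sugawara operators `L^S n`,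
together with operators `L^V n` satisfying the Virasoro relations with some
central charge `c` and commuting with all currents.  Set `L n = L^V n + L^S n`.
If `v ∈ V` satisfies `X(n) v = 0` for all `n ≥ 0`, then for every `κ`,
`(−2 L₋₂ + (κ/2) L₋₁² + (τ/2) Σ_a X_a(−1)²) v = (−2 L^V₋₂ + (κ/2)(L^V₋₁)²) v`;
in particular if `(−2 L^V₋₂ + (κ/2)(L^V₋₁)²) v = 0`, the total drift operator
annihilates `v`.
-/

/-!
On a vector `v` killed by all nonnegative modes, the Sugawara mode sum collapses:
`L^S_{-1} v = 0` and, at level `k + 1`, `L^S_{-2} v = (2 (k + 3))⁻¹ Σ_a X_a(-1)² v`.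
Since `L^V_{-1}` commutes with the currents, `L^V_{-1} v` is again such a vector, so
`L_{-1}² v = (L^V_{-1})² v`;
and the Sugawara part of `-2 L_{-2} v` is exactly cancelled by `(τ/2) Σ_a X_a(-1)² v`.
-/

section Vacuum

variable {V : Type*} [AddCommGroup V] [Module ℂ V]
  {cur : ↥(sl (Fin 2) ℂ) → ℤ → Module.End ℂ V}

def IsCurrentVacuum (cur : ↥(sl (Fin 2) ℂ) → ℤ → Module.End ℂ V) (w : V) : Prop :=
  ∀ (A : ↥(sl (Fin 2) ℂ)) (n : ℤ), 0 ≤ n → cur A n w = 0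

theorem IsCurrentVacuum.map_of_commute {w : V} (hw : IsCurrentVacuum cur w)
    {T : Module.End ℂ V} (hT : ∀ A n, ⁅T, cur A n⁆ = 0) : IsCurrentVacuum cur (T w) := by
  intro A n hn
  rw [← Module.End.mul_apply, ← (commute_iff_lie_eq.2 (hT A n)).eq, Module.End.mul_apply,
    hw A n hn, map_zero]

/-- Normal ordering puts a nonnegative mode to the right, so it hits the vacuum first. -/
theorem IsCurrentVacuum.nOrd_apply_eq_zero {w : V} (hw : IsCurrentVacuum cur w)
    (A : ↥(sl (Fin 2) ℂ)) {m l : ℤ} (h : 0 ≤ m ∨ 0 ≤ l) : nOrd cur A m l w = 0 := by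
  unfold nOrd
  split_ifs with hm
  · rw [Module.End.mul_apply, hw A l (h.resolve_left (not_le.2 hm)), map_zero]
  · rw [Module.End.mul_apply, hw A m (not_lt.1 hm), map_zero]

theorem IsSugawara.apply_neg_one_of_isCurrentVacuum {k : ℂ} {L : ℤ → Module.End ℂ V}
    (hL : IsSugawara k cur L) {w : V} (hw : IsCurrentVacuum cur w) : L (-1) w = 0 := by
  have hterm (m : ℤ) : (∑ a : Fin 3, nOrd cur (onb a) m (-1 - m)) w = 0 := by
    rw [LinearMap.sum_apply]
    exact Finset.sum_eq_zero fun a _ => hw.nOrd_apply_eq_zero _ (by omega)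
  rw [hL, finsum_congr hterm, finsum_zero, smul_zero]

/-- Only the term `m = -1` of the mode sum survives on the vacuum. -/
theorem IsSugawara.apply_neg_two_of_isCurrentVacuum {k : ℂ} {L : ℤ → Module.End ℂ V}
    (hL : IsSugawara k cur L) {w : V} (hw : IsCurrentVacuum cur w) :
    L (-2) w = (2 * (k + 2))⁻¹ • ∑ a : Fin 3, cur (onb a) (-1) (cur (onb a) (-1) w) := by
  have hterm (m : ℤ) (hm : m ≠ -1) : (∑ a : Fin 3, nOrd cur (onb a) m (-2 - m)) w = 0 := by
    rw [LinearMap.sum_apply]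
    exact Finset.sum_eq_zero fun a _ => hw.nOrd_apply_eq_zero _ (by omega)
  rw [hL, finsum_eq_single _ (-1) hterm, LinearMap.sum_apply]
  simp only [nOrd, show (-1 : ℤ) < 0 by norm_num, if_true, show (-2 : ℤ) - -1 = -1 by norm_num,
    Module.End.mul_apply]

end Vacuum

theorem coset_drift_cancellation_general
    (k : ℂ) (τ : ℂ) (hτ : τ = 2 / (k + 3))
    (V : Type*) [AddCommGroup V] [Module ℂ V]
    (R : SmoothCurrentRep (k + 1) V)
    (LS : ℤ → Module.End ℂ V) (hLS : IsSugawara (k + 1) R.cur LS)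
    (LV : ℤ → Module.End ℂ V)
    (hcomm : ∀ (A : ↥(sl (Fin 2) ℂ)) (m n : ℤ), ⁅LV m, R.cur A n⁆ = 0)
    (L : ℤ → Module.End ℂ V) (hL : ∀ n : ℤ, L n = LV n + LS n)
    (v : V) (hv : ∀ (A : ↥(sl (Fin 2) ℂ)) (n : ℤ), 0 ≤ n → R.cur A n v = 0) :
    ∀ κ : ℂ,
      ((-2 : ℂ) • L (-2) v + (κ / 2) • L (-1) (L (-1) v)
          + (τ / 2) • ∑ a : Fin 3, R.cur (onb a) (-1) (R.cur (onb a) (-1) v)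
        = (-2 : ℂ) • LV (-2) v + (κ / 2) • LV (-1) (LV (-1) v)) ∧
      ((-2 : ℂ) • LV (-2) v + (κ / 2) • LV (-1) (LV (-1) v) = 0 →
        (-2 : ℂ) • L (-2) v + (κ / 2) • L (-1) (L (-1) v)
          + (τ / 2) • ∑ a : Fin 3, R.cur (onb a) (-1) (R.cur (onb a) (-1) v) = 0) := by
  intro κ
  set S := ∑ a : Fin 3, R.cur (onb a) (-1) (R.cur (onb a) (-1) v)
  have hv' : IsCurrentVacuum R.cur (LV (-1) v) :=
    IsCurrentVacuum.map_of_commute hv (hcomm · (-1))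
  have hL1 : L (-1) (L (-1) v) = LV (-1) (LV (-1) v) := by
    have hL1v : L (-1) v = LV (-1) v := by
      rw [hL, LinearMap.add_apply, hLS.apply_neg_one_of_isCurrentVacuum hv, add_zero]
    rw [hL1v, hL, LinearMap.add_apply, hLS.apply_neg_one_of_isCurrentVacuum hv', add_zero]
  have hL2 : L (-2) v = LV (-2) v + (2 * (k + 3))⁻¹ • S := by
    rw [hL, LinearMap.add_apply, hLS.apply_neg_two_of_isCurrentVacuum hv,
      show k + 1 + 2 = k + 3 by ring]
  have hdrift : (-2 : ℂ) • L (-2) v + (κ / 2) • L (-1) (L (-1) v) + (τ / 2) • S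
      = (-2 : ℂ) • LV (-2) v + (κ / 2) • LV (-1) (LV (-1) v) := by
    have hcoef : (-2 : ℂ) * (2 * (k + 3))⁻¹ + τ / 2 = 0 := by
      rw [hτ, mul_inv]; ring
    rw [hL2, hL1]
    linear_combination (norm := module) hcoef • S
  exact ⟨hdrift, hdrift.trans⟩

theorem coset_drift_cancellation
    (k : ℂ) (hk2 : k ≠ -2) (hk3 : k ≠ -3) (τ : ℂ) (hτ : τ = 2 / (k + 3))
    (V : Type*) [AddCommGroup V] [Module ℂ V]
    (R : SmoothCurrentRep (k + 1) V)
    (LS : ℤ → Module.End ℂ V) (hLS : IsSugawara (k + 1) R.cur LS)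
    (LV : ℤ → Module.End ℂ V) (c : ℂ)
    (hVir : ∀ m n : ℤ, ⁅LV m, LV n⁆ = ((m : ℂ) - (n : ℂ)) • LV (m + n)
      + (if m + n = 0 then (((m : ℂ) ^ 3 - (m : ℂ)) / 12) * c else 0) • (1 : Module.End ℂ V))
    (hcomm : ∀ (A : ↥(sl (Fin 2) ℂ)) (m n : ℤ), ⁅LV m, R.cur A n⁆ = 0)
    (L : ℤ → Module.End ℂ V) (hL : ∀ n : ℤ, L n = LV n + LS n)
    (v : V) (hv : ∀ (A : ↥(sl (Fin 2) ℂ)) (n : ℤ), 0 ≤ n → R.cur A n v = 0) :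
    ∀ κ : ℂ,
      ((-2 : ℂ) • L (-2) v + (κ / 2) • L (-1) (L (-1) v)
          + (τ / 2) • ∑ a : Fin 3, R.cur (onb a) (-1) (R.cur (onb a) (-1) v)
        = (-2 : ℂ) • LV (-2) v + (κ / 2) • LV (-1) (LV (-1) v)) ∧
      ((-2 : ℂ) • LV (-2) v + (κ / 2) • LV (-1) (LV (-1) v) = 0 →
        (-2 : ℂ) • L (-2) v + (κ / 2) • L (-1) (L (-1) v)
          + (τ / 2) • ∑ a : Fin 3, R.cur (onb a) (-1) (R.cur (onb a) (-1) v) = 0) :=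
  coset_drift_cancellation_general k τ hτ V R LS hLS LV hcomm L hL v hv

end
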